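/- arXiv:1709.02346 — 2 statements merged into one kernel-verified Lean document; each statement's English description precedes it below -/
import Mathlib

section
/- If a closed sHML formula φ reduces to false (mfls) over a finite trace t according to the LTS semantics for formulas, and the actor system A can perform the weak trace t, then A violates φ with trace t according to the violation relation. -/
namespace RA

/-! ### Generic weak transitions over a labelled transition system -/

section Weak

variable {A : Type} {Act : Type}

/-- Reflexive-transitive closure of silent steps. -/
def TauStar (R : A → Option Act → A → Prop) : A → A → Prop :=
  Relation.ReflTransGen (fun a b => R a none b)

/-- Weak transition: for a visible action interleave τ-steps; for τ, τ-star. -/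
def WeakTr (R : A → Option Act → A → Prop) (a : A) (μ : Option Act) (b : A) : Prop :=
  match μ with
  | none => TauStar R a b
  | some α => ∃ x y, TauStar R a x ∧ R x (some α) y ∧ TauStar R y b

/-- Weak trace over a list of visible actions. -/
inductive WTrace (R : A → Option Act → A → Prop) : A → List Act → A → Prop
  | nil (a : A) : WTrace R a [] a
  | cons {a b c : A} {α : Act} {t : List Act} :
      WeakTr R a (some α) b → WTrace R b t c → WTrace R a (α :: t) c

/-- Prefix a trace with an optional (possibly silent) action. -/
def consOpt (μ : Option Act) (t : List Act) : List Act :=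
  match μ with
  | none => t
  | some α => α :: t

end Weak

/-! ### Value types of the adaptation type system -/

inductive Ty where
  | dat | upid | lpid | lpidb
  deriving DecidableEq

/-- A signature supplying the abstract data of the framework: patterns, actions,
boolean expressions, term substitutions, process identifiers/variables and
formula variables, together with the operations on them. -/
structure Sig where
  Pat : Type
  Act : Type
  BExp : Type
  Sub : Type
  Id : Type
  FVar : Type
  deqId : DecidableEq Id
  deqFVar : DecidableEq FVar
  /-- matching a pattern against a visible action -/
  mtch : Pat → Act → Option Sub
  /-- matching a pattern against a pattern -/
  mtchPat : Pat → Pat → Option Sub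
  /-- decidable evaluation of boolean expressions -/
  beval : BExp → Bool
  /-- subject of a pattern -/
  subjP : Pat → Id
  /-- subject of an action -/
  subjA : Act → Id
  /-- identifiers occurring in an action -/
  ids : Act → List Id
  /-- process-typed (upid/lpid) binders of an (annotated) pattern -/
  bnd : Pat → List (Id × Ty)
  /-- applying a substitution to a pattern -/
  subPat : Sub → Pat → Pat
  /-- applying a substitution to a boolean expression -/
  subB : Sub → BExp → BExp
  /-- applying a substitution to an identifier/variable -/
  subId : Sub → Id → Id

instance (S : Sig) : DecidableEq S.Id := S.deqId
instance (S : Sig) : DecidableEq S.FVar := S.deqFVar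

/-! ### sHML formulas and their semantics -/

inductive HML (S : Sig) where
  | tt | ff
  | conj (φ ψ : HML S)
  | nec (p : S.Pat) (φ : HML S)
  | fvar (X : S.FVar)
  | max (X : S.FVar) (φ : HML S)
  | cond (b : S.BExp) (φ ψ : HML S)

/-- Substitution of a formula for a formula variable in an sHML formula. -/
def hsubF (S : Sig) (χ : HML S) (X : S.FVar) : HML S → HML S
  | .tt => .tt
  | .ff => .ff
  | .conj φ ψ => .conj (hsubF S χ X φ) (hsubF S χ X ψ)
  | .nec p φ => .nec p (hsubF S χ X φ)
  | .fvar Y => if Y = X then χ else .fvar Y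
  | .max Y φ => if Y = X then .max Y φ else .max Y (hsubF S χ X φ)
  | .cond b φ ψ => .cond b (hsubF S χ X φ) (hsubF S χ X ψ)

/-- Applying a term substitution to an sHML formula. -/
def hsubA (S : Sig) (σ : S.Sub) : HML S → HML S
  | .tt => .tt
  | .ff => .ff
  | .conj φ ψ => .conj (hsubA S σ φ) (hsubA S σ ψ)
  | .nec p φ => .nec (S.subPat σ p) (hsubA S σ φ)
  | .fvar Y => .fvar Y
  | .max Y φ => .max Y (hsubA S σ φ)
  | .cond b φ ψ => .cond (S.subB σ b) (hsubA S σ φ) (hsubA S σ ψ)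

/-- Free formula variables of an sHML formula. -/
def hfv (S : Sig) : HML S → Finset S.FVar
  | .tt => ∅
  | .ff => ∅
  | .conj φ ψ => hfv S φ ∪ hfv S ψ
  | .nec _ φ => hfv S φ
  | .fvar X => {X}
  | .max X φ => hfv S φ \ {X}
  | .cond _ φ ψ => hfv S φ ∪ hfv S ψ

/-- Structural equivalence of sHML formulas. -/
inductive HEquiv (S : Sig) : HML S → HML S → Prop
  | refl (φ : HML S) : HEquiv S φ φ
  | symm {φ ψ : HML S} : HEquiv S φ ψ → HEquiv S ψ φ
  | trans {φ ψ χ : HML S} : HEquiv S φ ψ → HEquiv S ψ χ → HEquiv S φ χ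
  | comm (φ ψ : HML S) : HEquiv S (.conj φ ψ) (.conj ψ φ)
  | assoc (φ ψ χ : HML S) : HEquiv S (.conj φ (.conj ψ χ)) (.conj (.conj φ ψ) χ)
  | unit (φ : HML S) : HEquiv S (.conj .tt φ) φ
  | absorb (φ : HML S) : HEquiv S (.conj .ff φ) .ff
  | congc {φ φ' ψ ψ' : HML S} :
      HEquiv S φ φ' → HEquiv S ψ ψ' → HEquiv S (.conj φ ψ) (.conj φ' ψ')

/-- The LTS semantics of sHML formulas; labels are `Option S.Act` (`none` = τ). -/
inductive HStep (S : Sig) : HML S → Option S.Act → HML S → Prop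
  | idem1 (α : S.Act) : HStep S .ff (some α) .ff
  | idem2 (α : S.Act) : HStep S .tt (some α) .tt
  | ifT {b : S.BExp} {φ ψ : HML S} : S.beval b = true → HStep S (.cond b φ ψ) none φ
  | ifF {b : S.BExp} {φ ψ : HML S} : S.beval b = false → HStep S (.cond b φ ψ) none ψ
  | unfold (X : S.FVar) (φ : HML S) :
      HStep S (.max X φ) none (hsubF S (.max X φ) X φ)
  | nc1 {p : S.Pat} {α : S.Act} {σ : S.Sub} {φ : HML S} :
      S.mtch p α = some σ → HStep S (.nec p φ) (some α) (hsubA S σ φ)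
  | nc2 {p : S.Pat} {α : S.Act} {φ : HML S} :
      S.mtch p α = none → HStep S (.nec p φ) (some α) .tt
  | cn1 {φ φ' ψ ψ' : HML S} {α : S.Act} :
      HStep S φ (some α) φ' → HStep S ψ (some α) ψ' →
      HStep S (.conj φ ψ) (some α) (.conj φ' ψ')
  | cn2 {φ φ' ψ : HML S} : HStep S φ none φ' → HStep S (.conj φ ψ) none (.conj φ' ψ)
  | cn3 {φ ψ ψ' : HML S} : HStep S ψ none ψ' → HStep S (.conj φ ψ) none (.conj φ ψ')
  | str {φ φ₀ ψ₀ ψ : HML S} {μ : Option S.Act} :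
      HEquiv S φ φ₀ → HStep S φ₀ μ ψ₀ → HEquiv S ψ₀ ψ → HStep S φ μ ψ

/-- The violation relation `A , t ⊩v φ` for an actor system given by the
labelled relation `R` (with `none` as the silent action). -/
inductive Viol (S : Sig) {A : Type} (R : A → Option S.Act → A → Prop) :
    A → List S.Act → HML S → Prop
  | ff (a : A) (t : List S.Act) : Viol S R a t .ff
  | ifT {a : A} {t : List S.Act} {b : S.BExp} {φ ψ : HML S} :
      S.beval b = true → Viol S R a t φ → Viol S R a t (.cond b φ ψ)
  | ifF {a : A} {t : List S.Act} {b : S.BExp} {φ ψ : HML S} :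
      S.beval b = false → Viol S R a t ψ → Viol S R a t (.cond b φ ψ)
  | cnL {a : A} {t : List S.Act} {φ ψ : HML S} :
      Viol S R a t φ → Viol S R a t (.conj φ ψ)
  | cnR {a : A} {t : List S.Act} {φ ψ : HML S} :
      Viol S R a t ψ → Viol S R a t (.conj φ ψ)
  | nec {a a' : A} {t : List S.Act} {α : S.Act} {p : S.Pat} {σ : S.Sub} {φ : HML S} :
      WeakTr R a (some α) a' → S.mtch p α = some σ →
      Viol S R a' t (hsubA S σ φ) → Viol S R a (α :: t) (.nec p φ)
  | unfold {a : A} {t : List S.Act} {X : S.FVar} {φ : HML S} :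
      Viol S R a t (hsubF S (.max X φ) X φ) → Viol S R a t (.max X φ)

/-! ### Adaptation-script formulas -/

inductive AFrm (S : Sig) where
  | tt | ff
  | conj (φ ψ : AFrm S)
  /-- necessity `[p]^ρ_L φ`, with blocking modality `ρ` (`true` = blocking),
  a scope decoration `stk` and a release list `L` -/
  | nec (blocking : Bool) (p : S.Pat) (stk : Finset S.FVar) (L : List S.Id) (φ : AFrm S)
  | fvar (X : S.FVar)
  | max (X : S.FVar) (φ : AFrm S)
  | cond (b : S.BExp) (φ ψ : AFrm S)
  /-- synchronous adaptation with adaptation list and release list -/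
  | adS (Al Rl : List S.Id) (φ : AFrm S)
  /-- asynchronous adaptation with adaptation list and release list -/
  | adA (Al Rl : List S.Id) (φ : AFrm S)
  | blk (L : List S.Id) (φ : AFrm S)
  | rel (L : List S.Id) (φ : AFrm S)
  | clr (X : S.FVar) (φ : AFrm S)

/-- Substitution of a formula for a formula variable in an adaptation script. -/
def subF (S : Sig) (χ : AFrm S) (X : S.FVar) : AFrm S → AFrm S
  | .tt => .tt
  | .ff => .ff
  | .conj φ ψ => .conj (subF S χ X φ) (subF S χ X ψ)
  | .nec b p stk L φ => .nec b p stk L (subF S χ X φ)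
  | .fvar Y => if Y = X then χ else .fvar Y
  | .max Y φ => if Y = X then .max Y φ else .max Y (subF S χ X φ)
  | .cond c φ ψ => .cond c (subF S χ X φ) (subF S χ X ψ)
  | .adS Al Rl φ => .adS Al Rl (subF S χ X φ)
  | .adA Al Rl φ => .adA Al Rl (subF S χ X φ)
  | .blk L φ => .blk L (subF S χ X φ)
  | .rel L φ => .rel L (subF S χ X φ)
  | .clr Y φ => if Y = X then .clr Y φ else .clr Y (subF S χ X φ)

/-- Applying a term substitution to an adaptation script. -/
def subA (S : Sig) (σ : S.Sub) : AFrm S → AFrm S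
  | .tt => .tt
  | .ff => .ff
  | .conj φ ψ => .conj (subA S σ φ) (subA S σ ψ)
  | .nec b p stk L φ => .nec b (S.subPat σ p) stk (L.map (S.subId σ)) (subA S σ φ)
  | .fvar Y => .fvar Y
  | .max Y φ => .max Y (subA S σ φ)
  | .cond c φ ψ => .cond (S.subB σ c) (subA S σ φ) (subA S σ ψ)
  | .adS Al Rl φ => .adS (Al.map (S.subId σ)) (Rl.map (S.subId σ)) (subA S σ φ)
  | .adA Al Rl φ => .adA (Al.map (S.subId σ)) (Rl.map (S.subId σ)) (subA S σ φ)
  | .blk L φ => .blk (L.map (S.subId σ)) (subA S σ φ)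
  | .rel L φ => .rel (L.map (S.subId σ)) (subA S σ φ)
  | .clr Y φ => .clr Y (subA S σ φ)

/-- Free formula variables of an adaptation script. -/
def fvF (S : Sig) : AFrm S → Finset S.FVar
  | .tt => ∅
  | .ff => ∅
  | .conj φ ψ => fvF S φ ∪ fvF S ψ
  | .nec _ _ _ _ φ => fvF S φ
  | .fvar X => {X}
  | .max X φ => fvF S φ \ {X}
  | .cond _ φ ψ => fvF S φ ∪ fvF S ψ
  | .adS _ _ φ => fvF S φ
  | .adA _ _ φ => fvF S φ
  | .blk _ φ => fvF S φ
  | .rel _ φ => fvF S φ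
  | .clr X φ => fvF S φ \ {X}

/-- Structural equivalence of adaptation scripts. -/
inductive AEquiv (S : Sig) : AFrm S → AFrm S → Prop
  | refl (φ : AFrm S) : AEquiv S φ φ
  | symm {φ ψ : AFrm S} : AEquiv S φ ψ → AEquiv S ψ φ
  | trans {φ ψ χ : AFrm S} : AEquiv S φ ψ → AEquiv S ψ χ → AEquiv S φ χ
  | comm (φ ψ : AFrm S) : AEquiv S (.conj φ ψ) (.conj ψ φ)
  | assoc (φ ψ χ : AFrm S) : AEquiv S (.conj φ (.conj ψ χ)) (.conj (.conj φ ψ) χ)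
  | unit (φ : AFrm S) : AEquiv S (.conj .tt φ) φ
  | absorb (φ : AFrm S) : AEquiv S (.conj .ff φ) .ff
  | congc {φ φ' ψ ψ' : AFrm S} :
      AEquiv S φ φ' → AEquiv S ψ ψ' → AEquiv S (.conj φ ψ) (.conj φ' ψ')

/-! ### Environments -/

/-- Value type environments. -/
abbrev Env (S : Sig) := S.Id → Option Ty

/-- Formula environments. -/
abbrev FEnv (S : Sig) := S.FVar → Option (Env S)

/-- Scoping environments `U` tracking linear identifiers in use. -/
abbrev UEnv (S : Sig) := S.Id → Option (Finset S.FVar)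

/-- Abstract systems: partial maps recording whether an actor is blocked
(`some true`) or unblocked (`some false`). -/
abbrev Sys (S : Sig) := S.Id → Option Bool

/-- Dynamically-typed monitor configurations `⟨Γ, U, φ⟩`. -/
abbrev Conf (S : Sig) := Env S × UEnv S × AFrm S

/-- Lookup in an association list of typed identifiers. -/
def lkp (S : Sig) (l : List (S.Id × Ty)) (x : S.Id) : Option Ty :=
  (l.find? (fun q => decide (q.1 = x))).map Prod.snd

/-- Environment extension `(Γ, l)` by an association list. -/
def extL (S : Sig) (Γ : Env S) (l : List (S.Id × Ty)) : Env S :=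
  fun x => match lkp S l x with
    | some t => some t
    | none => Γ x

/-- Retype all identifiers in `L` to `t`. -/
def updL (S : Sig) (Γ : Env S) (L : List S.Id) (t : Ty) : Env S :=
  fun x => if x ∈ L then some t else Γ x

/-- Environment inclusion. -/
def EnvLe (S : Sig) (Γ Γ' : Env S) : Prop :=
  ∀ x t, Γ x = some t → Γ' x = some t

/-- Join of two environments (the extension `(Γ, Γ')`). -/
def envJoin (S : Sig) (Γ Γ' : Env S) : Env S :=
  fun x => match Γ x with
    | some t => some t
    | none => Γ' x

/-- Environment splitting `Γ = Γ₁ + Γ₂`: unrestricted entries are duplicated,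
linear entries go to exactly one side. -/
def Split (S : Sig) (Γ Γ₁ Γ₂ : Env S) : Prop :=
  (∀ x, Γ x = none → Γ₁ x = none ∧ Γ₂ x = none) ∧
  (∀ x t, Γ x = some t →
    ((t = Ty.dat ∨ t = Ty.upid) → Γ₁ x = some t ∧ Γ₂ x = some t) ∧
    ((t = Ty.lpid ∨ t = Ty.lpidb) →
      (Γ₁ x = some t ∧ Γ₂ x = none) ∨ (Γ₂ x = some t ∧ Γ₁ x = none)))

/-- The side-effect function `eff(Γ,L)`: retypes identifiers in `L` from
`lpidb` to `lpid`, leaving everything else unchanged. -/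
def eff (S : Sig) (Γ : Env S) (L : List S.Id) : Env S :=
  fun x => match Γ x with
    | some Ty.lpidb => if x ∈ L then some Ty.lpid else some Ty.lpidb
    | o => o

/-- Update of a formula environment. -/
def updF (S : Sig) (Δ : FEnv S) (X : S.FVar) (Γ : Env S) : FEnv S :=
  fun Y => if Y = X then some Γ else Δ Y

/-- Remove from `U` every entry scoped under the formula variable `X`. -/
def Udel (S : Sig) (U : UEnv S) (X : S.FVar) : UEnv S :=
  fun i => match U i with
    | some stk => if X ∈ stk then none else some stk
    | none => none

/-- Extend `U` with the linearly-typed identifiers of `l`, scoped under `stk`. -/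
def Uadd (S : Sig) (U : UEnv S) (l : List (S.Id × Ty)) (stk : Finset S.FVar) : UEnv S :=
  fun i => if lkp S l i = some Ty.lpid then some stk else U i

/-- Union of two scoping environments. -/
def Ujoin (S : Sig) (U U' : UEnv S) : UEnv S :=
  fun i => match U i, U' i with
    | some a, some b => some (a ∪ b)
    | some a, none => some a
    | none, o => o

/-- The process bindings of pattern `p` instantiated by substitution `σ`. -/
def bndS (S : Sig) (σ : S.Sub) (p : S.Pat) : List (S.Id × Ty) :=
  (S.bnd p).map (fun q => (S.subId σ q.1, q.2))

/-- The extension `(Γ, l)` remains a valid map (no type mismatch). -/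
def MapExtOK (S : Sig) (Γ : Env S) (l : List (S.Id × Ty)) : Prop :=
  (∀ q ∈ l, ∀ r ∈ l, q.1 = r.1 → q.2 = r.2) ∧
  (∀ q ∈ l, ∀ t, Γ q.1 = some t → q.2 = t)

/-! ### Mutual exclusion -/

/-- `φ` is a collection of trivially satisfied branches `rel(L₁).tt ∧ … ∧ rel(Lₙ).tt`. -/
def trivSat (S : Sig) : AFrm S → Bool
  | .rel _ .tt => true
  | .conj φ ψ => trivSat S φ && trivSat S ψ
  | _ => false

/-- The top guarding patterns of a branch (`none` stands for the universally
matching pattern of an unguarded branch). -/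
def fps (S : Sig) : AFrm S → List (Option S.Pat)
  | .nec _ p _ _ _ => [some p]
  | .cond _ φ ψ => fps S φ ++ fps S ψ
  | .conj φ ψ => fps S φ ++ fps S ψ
  | .max _ φ => fps S φ
  | .clr _ φ => fps S φ
  | _ => [none]

/-- `vexcl φ ψ`: if `φ` is mutually exclusive to `ψ`, the release set of `φ`. -/
def vexcl (S : Sig) : AFrm S → AFrm S → Option (List S.Id)
  | .conj φ₁ φ₂, ψ =>
      match vexcl S φ₁ ψ, vexcl S φ₂ ψ with
      | some a, some b => some (a ++ b)
      | _, _ => none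
  | .nec _ p _ L _, ψ =>
      if trivSat S ψ then some []
      else if (fps S ψ).all (fun q =>
          match q with
          | some q' => (S.mtchPat p q').isNone
          | none => false)
      then some L
      else none
  | .cond _ φ₁ φ₂, ψ =>
      if trivSat S ψ then some []
      else
        match vexcl S φ₁ ψ, vexcl S φ₂ ψ with
        | some a, some b => if a = b then some a else none
        | _, _ => none
  | .max _ φ, ψ => if trivSat S ψ then some [] else vexcl S φ ψ
  | .clr _ φ, ψ => if trivSat S ψ then some [] else vexcl S φ ψ
  | .rel L .tt, _ => some L
  | _, ψ => if trivSat S ψ then some [] else none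

/-- The mutual-exclusion function `excl`, returning the pair of release sets. -/
def excl (S : Sig) (φ ψ : AFrm S) : Option (List S.Id × List S.Id) :=
  match vexcl S φ ψ, vexcl S ψ φ with
  | some a, some b => some (a, b)
  | _, _ => none

/-! ### Labels -/

inductive MLab (S : Sig) where
  | act (α : S.Act)
  | tau
  | adS (L : List S.Id)
  | adA (L : List S.Id)
  | blk (L : List S.Id)
  | rel (L : List S.Id)

/-- Adaptation/synchronisation labels `κ`. -/
def isK (S : Sig) : MLab S → Prop
  | .adS _ => True
  | .adA _ => True
  | .blk _ => True
  | .rel _ => True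
  | .act _ => False
  | .tau => False

/-! ### Dynamically-typed monitor transitions -/

inductive MStep (S : Sig) : Conf S → MLab S → Conf S → Prop
  | idem1 (Γ : Env S) (U : UEnv S) (α : S.Act) :
      MStep S (Γ, U, AFrm.tt) (MLab.act α) (Γ, U, AFrm.tt)
  | idem2 (Γ : Env S) (U : UEnv S) (α : S.Act) :
      MStep S (Γ, U, AFrm.ff) (MLab.act α) (Γ, U, AFrm.ff)
  | unfold (Γ : Env S) (U : UEnv S) (X : S.FVar) (φ : AFrm S) :
      MStep S (Γ, U, AFrm.max X φ) MLab.tau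
        (Γ, U, subF S (AFrm.clr X (AFrm.max X φ)) X φ)
  | clear (Γ : Env S) (U : UEnv S) (X : S.FVar) (φ : AFrm S) :
      MStep S (Γ, U, AFrm.clr X φ) MLab.tau (Γ, Udel S U X, φ)
  | nc1 {Γ : Env S} {U : UEnv S} {p : S.Pat} {α : S.Act} {σ : S.Sub}
      {stk : Finset S.FVar} {L : List S.Id} {φ : AFrm S} :
      S.mtch p α = some σ →
      MapExtOK S Γ (bndS S σ p) →
      (∀ x : S.Id, (U x).isSome = true → lkp S (bndS S σ p) x = none) →
      (∀ x y : S.Id, (x, Ty.lpid) ∈ S.bnd p → (y, Ty.lpid) ∈ S.bnd p → x ≠ y →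
          S.subId σ x ≠ S.subId σ y) →
      MStep S (Γ, U, AFrm.nec true p stk L φ) (MLab.act α)
        (extL S Γ (bndS S σ p), Uadd S U (bndS S σ p) stk,
          AFrm.blk [S.subjA α] (subA S σ φ))
  | nc2 {Γ : Env S} {U : UEnv S} {p : S.Pat} {α : S.Act} {σ : S.Sub}
      {stk : Finset S.FVar} {L : List S.Id} {φ : AFrm S} :
      S.mtch p α = some σ →
      MapExtOK S Γ (bndS S σ p) →
      (∀ x : S.Id, (U x).isSome = true → lkp S (bndS S σ p) x = none) →
      (∀ x y : S.Id, (x, Ty.lpid) ∈ S.bnd p → (y, Ty.lpid) ∈ S.bnd p → x ≠ y →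
          S.subId σ x ≠ S.subId σ y) →
      MStep S (Γ, U, AFrm.nec false p stk L φ) (MLab.act α)
        (extL S Γ (bndS S σ p), Uadd S U (bndS S σ p) stk, subA S σ φ)
  | nc3 {Γ : Env S} {U : UEnv S} {ρ : Bool} {p : S.Pat} {α : S.Act}
      {stk : Finset S.FVar} {L : List S.Id} {φ : AFrm S} :
      S.mtch p α = none →
      MStep S (Γ, U, AFrm.nec ρ p stk L φ) (MLab.act α) (Γ, U, AFrm.rel L AFrm.tt)
  | ifT {Γ : Env S} {U : UEnv S} {b : S.BExp} {φ ψ : AFrm S} :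
      S.beval b = true → MStep S (Γ, U, AFrm.cond b φ ψ) MLab.tau (Γ, U, φ)
  | ifF {Γ : Env S} {U : UEnv S} {b : S.BExp} {φ ψ : AFrm S} :
      S.beval b = false → MStep S (Γ, U, AFrm.cond b φ ψ) MLab.tau (Γ, U, ψ)
  | cn1 {Γ Γ₁ Γ₂ : Env S} {U U₁ U₂ : UEnv S} {φ φ' ψ ψ' : AFrm S} {α : S.Act} :
      MStep S (Γ, U, φ) (MLab.act α) (Γ₁, U₁, φ') →
      MStep S (Γ, U, ψ) (MLab.act α) (Γ₂, U₂, ψ') →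
      (∀ i : S.Id, (U i).isSome = true ↔ ((U₁ i).isSome = true ∧ (U₂ i).isSome = true)) →
      MStep S (Γ, U, AFrm.conj φ ψ) (MLab.act α)
        (envJoin S Γ₁ Γ₂, Ujoin S U₁ U₂, AFrm.conj φ' ψ')
  | cn2l {Γ : Env S} {U U' : UEnv S} {φ φ' ψ : AFrm S} :
      MStep S (Γ, U, φ) MLab.tau (Γ, U', φ') →
      MStep S (Γ, U, AFrm.conj φ ψ) MLab.tau (Γ, U', AFrm.conj φ' ψ)
  | cn2r {Γ : Env S} {U U' : UEnv S} {φ ψ ψ' : AFrm S} :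
      MStep S (Γ, U, ψ) MLab.tau (Γ, U', ψ') →
      MStep S (Γ, U, AFrm.conj φ ψ) MLab.tau (Γ, U', AFrm.conj φ ψ')
  | cn3l {Γ Γ' : Env S} {U : UEnv S} {φ φ' ψ : AFrm S} {κ : MLab S} :
      isK S κ → MStep S (Γ, U, φ) κ (Γ', U, φ') →
      MStep S (Γ, U, AFrm.conj φ ψ) κ (Γ', U, AFrm.conj φ' ψ)
  | cn3r {Γ Γ' : Env S} {U : UEnv S} {φ ψ ψ' : AFrm S} {κ : MLab S} :
      isK S κ → MStep S (Γ, U, ψ) κ (Γ', U, ψ') →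
      MStep S (Γ, U, AFrm.conj φ ψ) κ (Γ', U, AFrm.conj φ ψ')
  | adAs (Γ : Env S) (U : UEnv S) (Al Rl : List S.Id) (φ : AFrm S) :
      MStep S (Γ, U, AFrm.adA Al Rl φ) (MLab.adA Al) (Γ, U, AFrm.rel Rl φ)
  | adSs (Γ : Env S) (U : UEnv S) (Al Rl : List S.Id) (φ : AFrm S) :
      MStep S (Γ, U, AFrm.adS Al Rl φ) (MLab.adS Al) (Γ, U, AFrm.rel Rl φ)
  | rels {Γ : Env S} {U : UEnv S} {L : List S.Id} {φ : AFrm S} :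
      (∀ i ∈ L, Γ i = some Ty.lpidb) →
      MStep S (Γ, U, AFrm.rel L φ) (MLab.rel L) (updL S Γ L Ty.lpid, U, φ)
  | blks {Γ : Env S} {U : UEnv S} {L : List S.Id} {φ : AFrm S} :
      (∀ i ∈ L, Γ i = some Ty.lpid) →
      MStep S (Γ, U, AFrm.blk L φ) (MLab.blk L) (updL S Γ L Ty.lpidb, U, φ)
  | str {Γ Γ' : Env S} {U U' : UEnv S} {φ φ₀ ψ₀ ψ : AFrm S} {μ : MLab S} :
      AEquiv S φ φ₀ → MStep S (Γ, U, φ₀) μ (Γ', U', ψ₀) → AEquiv S ψ₀ ψ →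
      MStep S (Γ, U, φ) μ (Γ', U', ψ)

/-! ### System transitions -/

inductive SysStep (S : Sig) : Sys S → MLab S → Sys S → Prop
  | new {s : Sys S} {i : S.Id} : s i = none →
      SysStep S s MLab.tau (fun x => if x = i then some false else s x)
  | act {s : Sys S} {α : S.Act} : s (S.subjA α) = some false →
      (∀ i ∈ S.ids α, (s i).isSome = true) → SysStep S s (MLab.act α) s
  | blk {s : Sys S} {L : List S.Id} : (∀ i ∈ L, s i = some false) →
      SysStep S s (MLab.blk L) (fun x => if x ∈ L then some true else s x)
  | rel {s : Sys S} {L : List S.Id} : (∀ i ∈ L, s i = some true) →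
      SysStep S s (MLab.rel L) (fun x => if x ∈ L then some false else s x)
  | adA {s : Sys S} {L : List S.Id} : (∀ i ∈ L, (s i).isSome = true) →
      SysStep S s (MLab.adA L) s
  | adS {s : Sys S} {L : List S.Id} : (∀ i ∈ L, s i = some true) →
      SysStep S s (MLab.adS L) s

/-! ### Instrumentation transitions -/

/-- The monitor configuration can perform some adaptation/synchronisation action. -/
def canK (S : Sig) (c : Conf S) : Prop :=
  ∃ κ c', isK S κ ∧ MStep S c κ c'

inductive IStep (S : Sig) : Sys S × Conf S → Option S.Act → Sys S × Conf S → Prop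
  | iAct {s s' : Sys S} {c c' : Conf S} {α : S.Act} :
      ¬ canK S c → SysStep S s (MLab.act α) s' → MStep S c (MLab.act α) c' →
      IStep S (s, c) (some α) (s', c')
  | iTrm {s s' : Sys S} {Γ : Env S} {U : UEnv S} {φ : AFrm S} {α : S.Act} :
      ¬ canK S (Γ, U, φ) → SysStep S s (MLab.act α) s' →
      (¬ ∃ c', MStep S (Γ, U, φ) (MLab.act α) c') →
      IStep S (s, (Γ, U, φ)) (some α) (s', (Γ, U, AFrm.tt))
  | iAda {s s' : Sys S} {c c' : Conf S} {κ : MLab S} :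
      isK S κ → MStep S c κ c' → SysStep S s κ s' →
      IStep S (s, c) none (s', c')
  | iSys {s s' : Sys S} {c : Conf S} :
      SysStep S s MLab.tau s' → IStep S (s, c) none (s', c)
  | iMon {s : Sys S} {c c' : Conf S} :
      MStep S c MLab.tau c' → IStep S (s, c) none (s, c')

/-- Multi-step instrumented transitions. -/
def IMany (S : Sig) : Sys S × Conf S → Sys S × Conf S → Prop :=
  Relation.ReflTransGen (fun x y => ∃ l, IStep S x l y)

/-! ### Errors, well-formedness, `after` -/

/-- Synchronisation error of a dynamically-typed configuration. -/
def Err (S : Sig) (s : Sys S) (c : Conf S) : Prop :=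
  ∃ L : List S.Id, (∀ i ∈ L, (s i).isSome = true) ∧
    (((∃ c', MStep S c (MLab.adS L) c') ∧ ¬ ∃ s', SysStep S s (MLab.adS L) s') ∨
     ((∃ c', MStep S c (MLab.rel L) c') ∧ ¬ ∃ s', SysStep S s (MLab.rel L) s'))

/-- System well-formedness: blocked-linear annotations correspond to blocked actors. -/
def WF (S : Sig) (s : Sys S) (Γ : Env S) : Prop :=
  ∀ i : S.Id, Γ i = some Ty.lpidb → s i = some true

/-- The (relationally presented) `after` function on value environments. -/
def After (S : Sig) (Γ : Env S) (μ : MLab S) (Γ' : Env S) : Prop :=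
  match μ with
  | MLab.blk L =>
      ((∀ i ∈ L, Γ i = some Ty.lpid) ∧ Γ' = updL S Γ L Ty.lpidb) ∨
      ((¬ ∀ i ∈ L, Γ i = some Ty.lpid) ∧ Γ' = Γ)
  | MLab.rel L =>
      ((∀ i ∈ L, Γ i = some Ty.lpidb) ∧ Γ' = updL S Γ L Ty.lpid) ∨
      ((¬ ∀ i ∈ L, Γ i = some Ty.lpidb) ∧ Γ' = Γ)
  | MLab.act _ => EnvLe S Γ Γ'
  | _ => Γ' = Γ

/-! ### The static type system -/

inductive Types (S : Sig) : FEnv S → Env S → AFrm S → Prop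
  | tru {Δ : FEnv S} {Γ : Env S} : Types S Δ Γ AFrm.tt
  | fls {Δ : FEnv S} {Γ : Env S} : Types S Δ Γ AFrm.ff
  | cnd {Δ : FEnv S} {Γ : Env S} {b : S.BExp} {φ ψ : AFrm S} :
      Types S Δ Γ φ → Types S Δ Γ ψ → Types S Δ Γ (AFrm.cond b φ ψ)
  | ncA {Δ : FEnv S} {Γ : Env S} {p : S.Pat} {stk : Finset S.FVar}
      {L : List S.Id} {φ : AFrm S} :
      Types S Δ (extL S Γ (S.bnd p)) φ →
      Types S Δ Γ (AFrm.rel L AFrm.tt) →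
      Types S Δ Γ (AFrm.nec false p stk L φ)
  | ncB {Δ : FEnv S} {Γ : Env S} {p : S.Pat} {stk : Finset S.FVar}
      {L : List S.Id} {φ : AFrm S} :
      Types S Δ (extL S Γ (S.bnd p)) (AFrm.blk [S.subjP p] φ) →
      Types S Δ Γ (AFrm.rel L AFrm.tt) →
      Types S Δ Γ (AFrm.nec true p stk L φ)
  | blk {Δ : FEnv S} {Γ : Env S} {L : List S.Id} {φ : AFrm S} :
      (∀ i ∈ L, Γ i = some Ty.lpid) →
      Types S Δ (updL S Γ L Ty.lpidb) φ → Types S Δ Γ (AFrm.blk L φ)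
  | rel {Δ : FEnv S} {Γ : Env S} {L : List S.Id} {φ : AFrm S} :
      (∀ i ∈ L, Γ i = some Ty.lpidb) →
      Types S Δ (updL S Γ L Ty.lpid) φ → Types S Δ Γ (AFrm.rel L φ)
  | adA {Δ : FEnv S} {Γ : Env S} {Al Rl : List S.Id} {φ : AFrm S} :
      (∀ i ∈ Al, Γ i = some Ty.lpid) →
      Types S Δ Γ (AFrm.rel Rl φ) → Types S Δ Γ (AFrm.adA Al Rl φ)
  | adS {Δ : FEnv S} {Γ : Env S} {Al Rl : List S.Id} {φ : AFrm S} :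
      (∀ i ∈ Al, Γ i = some Ty.lpidb) →
      Types S Δ Γ (AFrm.rel Rl φ) → Types S Δ Γ (AFrm.adS Al Rl φ)
  | cn1 {Δ : FEnv S} {Γ Γ₁ Γ₂ : Env S} {φ ψ : AFrm S} :
      excl S φ ψ = none → Split S Γ Γ₁ Γ₂ →
      Types S Δ Γ₁ φ → Types S Δ Γ₂ ψ → Types S Δ Γ (AFrm.conj φ ψ)
  | cn2 {Δ : FEnv S} {Γ : Env S} {φ ψ : AFrm S} {Lφ Lψ : List S.Id} :
      excl S φ ψ = some (Lφ, Lψ) →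
      Types S Δ (eff S Γ Lψ) φ → Types S Δ (eff S Γ Lφ) ψ →
      Types S Δ Γ (AFrm.conj φ ψ)
  | fix {Δ : FEnv S} {Γ : Env S} {X : S.FVar} {φ : AFrm S} :
      Types S (updF S Δ X Γ) Γ φ → Types S Δ Γ (AFrm.max X φ)
  | var {Δ : FEnv S} {Γ Γ₀ : Env S} {X : S.FVar} :
      Δ X = some Γ₀ → EnvLe S Γ₀ Γ → Types S Δ Γ (AFrm.fvar X)
  | clr {Δ : FEnv S} {Γ : Env S} {X : S.FVar} {φ : AFrm S} :
      Types S Δ Γ φ → Types S Δ Γ (AFrm.clr X φ)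


/-! Violation is closed backwards along the formula LTS. A τ-step of the formula is undone by the
matching violation rule on the same trace; a visible α-step of `[p]φ` is undone by the rule for
`[p]φ`, fed with the system's weak α-transition; `ff` steps to itself and `tt` is never violated.
Structural equivalence preserves violation because `⊩v` reads a conjunction as a disjunction.
Running the reduction of the formula to `ff` in step with the system's weak trace thus builds the
violation backwards from `ff`. -/

section Violation

variable {S : Sig} {A : Type} {R : A → Option S.Act → A → Prop}

theorem Viol.not_tt {a : A} {t : List S.Act} : ¬ Viol S R a t .tt := by
  rintro ⟨⟩

theorem Viol.conj_iff {a : A} {t : List S.Act} {φ ψ : HML S} :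
    Viol S R a t (.conj φ ψ) ↔ Viol S R a t φ ∨ Viol S R a t ψ := by
  constructor
  · rintro (_ | _ | _ | ⟨h⟩ | ⟨h⟩)
    exacts [.inl h, .inr h]
  · rintro (h | h)
    exacts [.cnL h, .cnR h]

theorem HEquiv.viol_iff {φ ψ : HML S} (h : HEquiv S φ ψ) (a : A) (t : List S.Act) :
    Viol S R a t φ ↔ Viol S R a t ψ := by
  induction h with
  | refl => rfl
  | symm _ ih => exact ih.symm
  | trans _ _ ih₁ ih₂ => exact ih₁.trans ih₂
  | comm => simp only [Viol.conj_iff]; exact or_comm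
  | assoc => simp only [Viol.conj_iff]; exact or_assoc.symm
  | unit => simp only [Viol.conj_iff, Viol.not_tt, false_or]
  | absorb => exact iff_of_true (.cnL (.ff a t)) (.ff a t)
  | congc _ _ ih₁ ih₂ => simp only [Viol.conj_iff]; exact or_congr ih₁ ih₂

theorem HStep.viol_of_tau {φ φ' : HML S} (h : HStep S φ none φ') {a : A} {t : List S.Act}
    (hv : Viol S R a t φ') : Viol S R a t φ := by
  generalize hμ : (none : Option S.Act) = μ at h
  induction h with
  | ifT hb => exact .ifT hb hv
  | ifF hb => exact .ifF hb hv
  | unfold => exact .unfold hv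
  | cn2 _ ih => exact (Viol.conj_iff.mp hv).elim (fun h => .cnL (ih h hμ)) .cnR
  | cn3 _ ih => exact (Viol.conj_iff.mp hv).elim .cnL (fun h => .cnR (ih h hμ))
  | str he₁ _ he₂ ih => exact (he₁.viol_iff a t).mpr (ih ((he₂.viol_iff a t).mpr hv) hμ)
  | _ => cases hμ

theorem HStep.viol_of_visible {φ φ' : HML S} {α : S.Act} (h : HStep S φ (some α) φ')
    {a a' : A} (hw : WeakTr R a (some α) a') {t : List S.Act} (hv : Viol S R a' t φ') :
    Viol S R a (α :: t) φ := by
  generalize hμ : some α = μ at h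
  induction h with
  | idem1 => exact .ff a _
  | idem2 | nc2 _ => exact (Viol.not_tt hv).elim
  | nc1 hm => cases hμ; exact .nec hw hm hv
  | cn1 _ _ ih₁ ih₂ =>
    cases hμ
    exact (Viol.conj_iff.mp hv).elim (fun h => .cnL (ih₁ h rfl)) (fun h => .cnR (ih₂ h rfl))
  | str he₁ _ he₂ ih => exact (he₁.viol_iff a _).mpr (ih ((he₂.viol_iff a' t).mpr hv) hμ)
  | _ => cases hμ

theorem viol_of_tauStar {φ φ' : HML S} (h : TauStar (HStep S) φ φ') {a : A} {t : List S.Act}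
    (hv : Viol S R a t φ') : Viol S R a t φ := by
  induction h with
  | refl => exact hv
  | tail _ hstep ih => exact ih (hstep.viol_of_tau hv)

theorem viol_of_weakTr {φ φ' : HML S} {α : S.Act} (h : WeakTr (HStep S) φ (some α) φ')
    {a a' : A} (hw : WeakTr R a (some α) a') {t : List S.Act} (hv : Viol S R a' t φ') :
    Viol S R a (α :: t) φ := by
  obtain ⟨ψ, ψ', hpre, hstep, hpost⟩ := h
  exact viol_of_tauStar hpre (hstep.viol_of_visible hw (viol_of_tauStar hpost hv))

theorem viol_of_wTrace {φ φ' : HML S} {t : List S.Act} (h : WTrace (HStep S) φ t φ')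
    {a a' : A} (htr : WTrace R a t a') {t' : List S.Act} (hv : Viol S R a' t' φ') :
    Viol S R a (t ++ t') φ := by
  induction h generalizing a with
  | nil => cases htr; exact hv
  | cons hφ _ ih =>
    obtain _ | ⟨ha, htr'⟩ := htr
    exact viol_of_weakTr hφ ha (ih htr' hv)

end Violation

theorem statement0_general (S : Sig) {A : Type} (R : A → Option S.Act → A → Prop)
    (φ : HML S) (t : List S.Act) (a : A)
    (hred : WTrace (HStep S) φ t HML.ff)
    (htr : ∃ a', WTrace R a t a') :
    Viol S R a t φ := by
  obtain ⟨a', htr⟩ := htr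
  simpa using viol_of_wTrace hred htr (.ff a' [])

/-- if a closed sHML formula `φ` reduces to `ff` over a finite trace
`t` in the formula LTS, and the actor system `a` can perform the weak trace `t`,
then `a` violates `φ` with trace `t`. -/
theorem statement0 (S : Sig) {A : Type} (R : A → Option S.Act → A → Prop)
    (φ : HML S) (t : List S.Act) (a : A)
    (hclosed : hfv S φ = ∅)
    (hred : WTrace (HStep S) φ t HML.ff)
    (htr : ∃ a', WTrace R a t a') :
    Viol S R a t φ :=
  statement0_general S R φ t a hred htr

end RA
end

section
/- Mutual exclusion under fixpoint substitution: if excl(φ, ψ) = (L_φ, L_ψ), then substituting (clr X. max X.φ') for the formula variable X in φ alone, or in both φ and ψ, leaves the result of excl unchanged: excl(φ[(clr X. max X.φ')/X], ψ) = (L_φ, L_ψ) and excl(φ[(clr X. max X.φ')/X], ψ[(clr X. max X.φ')/X]) = (L_φ, L_ψ). -/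
namespace RA

/-!
`vexcl φ ψ` only looks at the top-level structure of `φ`: an occurrence of `X` under a
necessity is invisible to it, and a top-level occurrence (possibly under `rel`) has a defined
`vexcl` only against a trivially satisfied `ψ`, where it yields `[]` exactly as the
`clr`-headed formula substituted for it does. On the opposing side, substitution preserves
`trivSat` (a `clr`-headed formula is never trivially satisfied) and changes the top patterns
only where the universal pattern stood, which already made every necessity check fail.
-/

section Excl

variable {S : Sig}

theorem excl_eq_some_iff {φ ψ : AFrm S} {Lφ Lψ : List S.Id} :
    excl S φ ψ = some (Lφ, Lψ) ↔ vexcl S φ ψ = some Lφ ∧ vexcl S ψ φ = some Lψ := by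
  unfold excl
  cases vexcl S φ ψ <;> cases vexcl S ψ φ <;> simp

theorem vexcl_conj_eq_some {φ₁ φ₂ ψ : AFrm S} {L : List S.Id} :
    vexcl S (.conj φ₁ φ₂) ψ = some L ↔
      ∃ a b, vexcl S φ₁ ψ = some a ∧ vexcl S φ₂ ψ = some b ∧ a ++ b = L := by
  simp only [vexcl]
  cases vexcl S φ₁ ψ <;> cases vexcl S φ₂ ψ <;> simp

theorem vexcl_cond_eq_some {c : S.BExp} {φ₁ φ₂ ψ : AFrm S} {L : List S.Id} :
    vexcl S (.cond c φ₁ φ₂) ψ = some L ↔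
      (trivSat S ψ ∧ L = []) ∨
        (trivSat S ψ = false ∧ vexcl S φ₁ ψ = some L ∧ vexcl S φ₂ ψ = some L) := by
  simp only [vexcl]
  cases trivSat S ψ <;> cases vexcl S φ₁ ψ <;> cases vexcl S φ₂ ψ <;> simp
  grind

theorem trivSat_subF_clr (χ : AFrm S) (X Y : S.FVar) (ψ : AFrm S) :
    trivSat S (subF S (.clr Y χ) X ψ) = trivSat S ψ := by
  induction ψ with
  | conj φ ψ ih₁ ih₂ => simp only [subF, trivSat, ih₁, ih₂]
  | rel L φ _ => cases φ <;> simp only [subF, trivSat] <;> split <;> rfl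
  | fvar Z | max Z _ _ | clr Z _ _ => simp only [subF]; split <;> rfl
  | _ => rfl

theorem fps_subF (χ : AFrm S) (X : S.FVar) {ψ : AFrm S} (h : none ∉ fps S ψ) :
    fps S (subF S χ X ψ) = fps S ψ := by
  induction ψ with
  | conj φ ψ ih₁ ih₂ | cond _ φ ψ ih₁ ih₂ =>
      simp only [fps, List.mem_append, not_or] at h
      simp only [subF, fps, ih₁ h.1, ih₂ h.2]
  | nec => rfl
  | max Y φ ih | clr Y φ ih =>
      simp only [subF]
      split
      · rfl
      · exact ih h
  | _ => simp [fps] at h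

theorem vexcl_eq_some_of_trivSat_eq {ψ ψ' : AFrm S} (ht : trivSat S ψ' = trivSat S ψ)
    (hf : none ∉ fps S ψ → fps S ψ' = fps S ψ) {φ : AFrm S} {L : List S.Id}
    (h : vexcl S φ ψ = some L) : vexcl S φ ψ' = some L := by
  induction φ generalizing L with
  | conj φ₁ φ₂ ih₁ ih₂ =>
      obtain ⟨a, b, ha, hb, rfl⟩ := vexcl_conj_eq_some.mp h
      exact vexcl_conj_eq_some.mpr ⟨a, b, ih₁ ha, ih₂ hb, rfl⟩
  | cond c φ₁ φ₂ ih₁ ih₂ =>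
      rw [vexcl_cond_eq_some, ht] at *
      exact h.imp_right (And.imp_right (And.imp ih₁ ih₂))
  | nec b p stk L' φ _ =>
      simp only [vexcl, ht] at h ⊢
      split_ifs at h with htr hall
      · rwa [if_pos htr]
      · have hn : none ∉ fps S ψ := fun hmem => by
          simpa using List.all_eq_true.mp hall _ hmem
        rwa [if_neg htr, hf hn, if_pos hall]
  | max Y φ ih | clr Y φ ih =>
      simp only [vexcl, ht] at h ⊢
      split_ifs at h ⊢
      exacts [h, ih h]
  | rel L' φ _ => cases φ <;> simpa only [vexcl, ht] using h
  | _ => simpa only [vexcl, ht] using h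

theorem vexcl_subF_clr_left (χ : AFrm S) (X Y : S.FVar) {φ ψ : AFrm S} {L : List S.Id}
    (h : vexcl S φ ψ = some L) : vexcl S (subF S (.clr Y χ) X φ) ψ = some L := by
  induction φ generalizing L with
  | conj φ₁ φ₂ ih₁ ih₂ =>
      obtain ⟨a, b, ha, hb, rfl⟩ := vexcl_conj_eq_some.mp h
      exact vexcl_conj_eq_some.mpr ⟨a, b, ih₁ ha, ih₂ hb, rfl⟩
  | cond c φ₁ φ₂ ih₁ ih₂ =>
      rw [subF, vexcl_cond_eq_some] at *
      exact h.imp_right (And.imp_right (And.imp ih₁ ih₂))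
  | nec => exact h
  | fvar Z =>
      simp only [vexcl, subF] at h ⊢
      split_ifs at h ⊢ <;> simp_all [vexcl]
  | max Z φ ih | clr Z φ ih =>
      simp only [subF]
      split_ifs
      · exact h
      · simp only [vexcl] at h ⊢
        split_ifs at h ⊢
        exacts [h, ih h]
  | rel L' φ _ =>
      cases φ <;> simp only [subF] <;> try split
      all_goals simpa only [vexcl] using h
  | _ => simpa only [subF, vexcl] using h

theorem vexcl_subF_clr_right (χ : AFrm S) (X Y : S.FVar) {φ ψ : AFrm S} {L : List S.Id}
    (h : vexcl S φ ψ = some L) : vexcl S φ (subF S (.clr Y χ) X ψ) = some L :=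
  vexcl_eq_some_of_trivSat_eq (trivSat_subF_clr χ X Y ψ) (fps_subF _ X) h

end Excl

/-- mutual exclusion under fixpoint substitution: substituting
`clr X. max X.φ₀` for `X` in `φ` alone, or in both `φ` and `ψ`, leaves the
result of `excl` unchanged. -/
theorem statement12 (S : Sig) (φ ψ φ₀ : AFrm S) (X : S.FVar)
    (Lφ Lψ : List S.Id)
    (hex : excl S φ ψ = some (Lφ, Lψ)) :
    excl S (subF S (AFrm.clr X (AFrm.max X φ₀)) X φ) ψ = some (Lφ, Lψ) ∧
    excl S (subF S (AFrm.clr X (AFrm.max X φ₀)) X φ)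
           (subF S (AFrm.clr X (AFrm.max X φ₀)) X ψ) = some (Lφ, Lψ) := by
  obtain ⟨hφψ, hψφ⟩ := excl_eq_some_iff.mp hex
  have hφ'ψ := vexcl_subF_clr_left (.max X φ₀) X X hφψ
  have hψφ' := vexcl_subF_clr_right (.max X φ₀) X X hψφ
  refine ⟨excl_eq_some_iff.mpr ⟨hφ'ψ, hψφ'⟩, excl_eq_some_iff.mpr ⟨?_, ?_⟩⟩
  · exact vexcl_subF_clr_right (.max X φ₀) X X hφ'ψ
  · exact vexcl_subF_clr_left (.max X φ₀) X X hψφ'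

end RA
end
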